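/- arXiv:1402.4220 — 3 statements merged into one kernel-verified Lean document; each statement's English description precedes it below -/
import Mathlib

section
/- Let T : H₁ → H₂ be an isometry between Hilbert spaces, K₁ ⊆ H₁ and K₂ ⊆ H₂ closed subspaces with T(K₁) ⊆ K₂, and let T̃ be the restriction of T. Set N₁ = H₁ ⊖ K₁, N₂ = H₂ ⊖ K₂ and L = (closed span of N₂ ∪ T N₁) ⊖ N₂. Then ker T̃* = L ⊕ (ker T* ∩ K₂), an orthogonal direct sum. -/
/-!
Write `A = T K₁`, `B = T N₁` and `M` for the closed span of `N₂ ∪ B`, so that `L = M ⊓ K₂` and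
`Mᗮ = K₂ ⊓ Bᗮ`. Since `T` is an isometry, `A ⟂ B`, and `A ≤ K₂`, so `A ≤ Mᗮ`. Now
`ker T̃* = K₂ ⊓ Aᗮ` and `ker T* ⊓ K₂ = K₂ ⊓ (A ⊔ B)ᗮ ≤ Mᗮ`. Splitting `y ∈ K₂ ⊓ Aᗮ` along
`M ⊕ Mᗮ` gives `m ∈ M ⊓ K₂ = L` and `m' ∈ K₂ ⊓ Bᗮ`, which is also orthogonal to `A` because
`y` and `m` are.
-/

open ContinuousLinearMap

namespace Submodule

variable {𝕜 E : Type*} [RCLike 𝕜] [NormedAddCommGroup E] [InnerProductSpace 𝕜 E]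

theorem orthogonal_topologicalClosure_orthogonal_sup (K B : Submodule 𝕜 E)
    [K.HasOrthogonalProjection] : ((Kᗮ ⊔ B).topologicalClosure)ᗮ = K ⊓ Bᗮ := by
  rw [orthogonal_closure, ← inf_orthogonal, orthogonal_orthogonal]

theorem inf_orthogonal_eq_topologicalClosure_inf_sup [CompleteSpace E] {K A B : Submodule 𝕜 E}
    [K.HasOrthogonalProjection] (hAK : A ≤ K) (hAB : A ⟂ B) :
    K ⊓ Aᗮ = (Kᗮ ⊔ B).topologicalClosure ⊓ K ⊔ (A ⊔ B)ᗮ ⊓ K := by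
  set M := (Kᗮ ⊔ B).topologicalClosure
  have : CompleteSpace M := isClosed_topologicalClosure _ |>.completeSpace_coe
  have hM : Mᗮ = K ⊓ Bᗮ := orthogonal_topologicalClosure_orthogonal_sup K B
  have hMA : M ≤ Aᗮ := IsOrtho.symm (show A ≤ Mᗮ from hM ▸ le_inf hAK hAB)
  refine le_antisymm ?_ (sup_le (le_inf inf_le_right (inf_le_left.trans hMA))
    (le_inf inf_le_right (inf_le_left.trans (orthogonal_le le_sup_left))))
  rintro y ⟨hyK, hyA⟩
  obtain ⟨m, hm, m', hm', rfl⟩ := M.exists_add_mem_mem_orthogonal y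
  rw [hM] at hm'
  have hmK : m ∈ K := by simpa using K.sub_mem hyK hm'.1
  have hm'A : m' ∈ Aᗮ := by simpa using Aᗮ.sub_mem hyA (hMA hm)
  exact add_mem_sup ⟨hm, hmK⟩ ⟨inf_orthogonal A B ▸ ⟨hm'A, hm'.2⟩, hm'.1⟩

end Submodule

section

variable {𝕜 E F : Type*} [RCLike 𝕜] [NormedAddCommGroup E] [InnerProductSpace 𝕜 E]
  [NormedAddCommGroup F] [InnerProductSpace 𝕜 F]

theorem ContinuousLinearMap.map_subtype_ker_adjoint_eq_of_restrict (T : E →L[𝕜] F)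
    {U : Submodule 𝕜 E} {V : Submodule 𝕜 F} [CompleteSpace U] [CompleteSpace V]
    (S : U →L[𝕜] V) (hS : ∀ x : U, (S x : F) = T x) :
    (LinearMap.ker (adjoint S : V →ₗ[𝕜] U)).map V.subtype = V ⊓ (U.map (T : E →ₗ[𝕜] F))ᗮ := by
  rw [← orthogonal_range]
  ext y
  constructor
  · rintro ⟨v, hv, rfl⟩
    refine ⟨v.2, ?_⟩
    rintro _ ⟨x, hx, rfl⟩
    simpa [Submodule.coe_inner, hS] using hv (S ⟨x, hx⟩) ⟨_, rfl⟩
  · rintro ⟨hyV, hy⟩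
    refine ⟨⟨y, hyV⟩, ?_, rfl⟩
    rintro _ ⟨x, rfl⟩
    change inner 𝕜 (S x) (⟨y, hyV⟩ : V) = 0
    rw [Submodule.coe_inner, hS]
    exact hy _ ⟨x, x.2, rfl⟩

variable [CompleteSpace E] [CompleteSpace F]

theorem ContinuousLinearMap.ker_adjoint_eq_orthogonal_map_sup_map_orthogonal (T : E →L[𝕜] F)
    (K : Submodule 𝕜 E) [K.HasOrthogonalProjection] :
    LinearMap.ker (adjoint T : F →ₗ[𝕜] E) = (K.map (T : E →ₗ[𝕜] F) ⊔ Kᗮ.map (T : E →ₗ[𝕜] F))ᗮ := by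
  rw [← Submodule.map_sup, K.sup_orthogonal_of_hasOrthogonalProjection, Submodule.map_top,
    ← orthogonal_range]

end

/-- For an isometry T with T K₁ ⊆ K₂, ker T̃* = L ⊕ (ker T* ∩ K₂), an orthogonal direct sum,
where L = (closed span of N₂ ∪ T N₁) ⊖ N₂, N₁ = K₁ᗮ, N₂ = K₂ᗮ. -/
theorem stmt_2
    {H₁ H₂ : Type*} [NormedAddCommGroup H₁] [InnerProductSpace ℂ H₁] [CompleteSpace H₁]
    [NormedAddCommGroup H₂] [InnerProductSpace ℂ H₂] [CompleteSpace H₂]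
    (T : H₁ →L[ℂ] H₂) (hT : ∀ x, ‖T x‖ = ‖x‖)
    (K₁ : Submodule ℂ H₁) (K₂ : Submodule ℂ H₂)
    [CompleteSpace K₁] [CompleteSpace K₂]
    (hTK : ∀ x ∈ K₁, T x ∈ K₂)
    (Tt : K₁ →L[ℂ] K₂) (hTt : ∀ x : K₁, (Tt x : H₂) = T x)
    (L : Submodule ℂ H₂)
    (hL : L = (K₂ᗮ ⊔ Submodule.map (T : H₁ →ₗ[ℂ] H₂) K₁ᗮ).topologicalClosure ⊓ (K₂ᗮ)ᗮ) :
    (∀ l ∈ L, ∀ k ∈ LinearMap.ker ((adjoint T : H₂ →L[ℂ] H₁) : H₂ →ₗ[ℂ] H₁) ⊓ K₂, (inner ℂ l k : ℂ) = 0) ∧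
    Submodule.map K₂.subtype (LinearMap.ker ((adjoint Tt : K₂ →L[ℂ] K₁) : K₂ →ₗ[ℂ] K₁)) =
      L ⊔ (LinearMap.ker ((adjoint T : H₂ →L[ℂ] H₁) : H₂ →ₗ[ℂ] H₁) ⊓ K₂) := by
  set A := K₁.map (T : H₁ →ₗ[ℂ] H₂)
  set B := K₁ᗮ.map (T : H₁ →ₗ[ℂ] H₂)
  have hAK : A ≤ K₂ := by
    rintro _ ⟨x, hx, rfl⟩
    exact hTK x hx
  have hAB : A ⟂ B := K₁.isOrtho_orthogonal_right.map (⟨T, hT⟩ : H₁ →ₗᵢ[ℂ] H₂)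
  have hLker : (K₂ᗮ ⊔ B).topologicalClosure ⟂ (A ⊔ B)ᗮ ⊓ K₂ := by
    refine (Submodule.isOrtho_orthogonal_right _).mono_right ?_
    rw [Submodule.orthogonal_topologicalClosure_orthogonal_sup]
    exact le_inf inf_le_right (inf_le_left.trans (Submodule.orthogonal_le le_sup_right))
  subst hL
  rw [K₂.orthogonal_orthogonal, T.ker_adjoint_eq_orthogonal_map_sup_map_orthogonal K₁,
    T.map_subtype_ker_adjoint_eq_of_restrict Tt hTt]
  exact ⟨Submodule.isOrtho_iff_inner_eq.mp (hLker.mono_left inf_le_left),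
    Submodule.inf_orthogonal_eq_topologicalClosure_inf_sup hAK hAB⟩
end

section
/- Let T : H₁ → H₂ be an isometry between Hilbert spaces, K₁ ⊆ H₁ and K₂ ⊆ H₂ closed subspaces with T(K₁) ⊆ K₂. With N₁ = K₁^⊥, N₂ = K₂^⊥, L = (closed span of N₂ ∪ T N₁) ⊖ N₂, and T̃ the restriction of T, one has ker T̃* = closed span of L and P_{K₂}(ker T*). -/
/-!
Write `M = T K₁`. The left-hand side is `Mᗮ ⊓ K₂`. Since `T` preserves inner products,
`T K₁ᗮ ⊥ M` and `(ker T*)ᗮ = closure (M ⊔ T K₁ᗮ)`, which forces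
`Mᗮ = closure (T K₁ᗮ ⊔ ker T*)`. As `K₂ᗮ ⊆ Mᗮ`, the projection `P_{K₂}` maps `Mᗮ` into
`Mᗮ ⊓ K₂` and fixes `Mᗮ ⊓ K₂`; and `P_{K₂} w = w - (w - P_{K₂} w) ∈ K₂ᗮ ⊔ T K₁ᗮ` for
`w ∈ T K₁ᗮ`, so `P_{K₂} (T K₁ᗮ) ⊆ L`.
-/

open ContinuousLinearMap

open scoped InnerProductSpace

namespace Submodule

variable {𝕜 E F : Type*} [RCLike 𝕜] [NormedAddCommGroup E] [InnerProductSpace 𝕜 E]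
  [NormedAddCommGroup F] [InnerProductSpace 𝕜 F]

/-- With `P` the projection onto `closure A`, `u - P u ⊥ A ⊔ B`, hence `u - P u ⊥ u` and
`u - P u ⊥ P u`. -/
lemma topologicalClosure_sup_inf_orthogonal_le [CompleteSpace E] {A B : Submodule 𝕜 E}
    (hAB : A ⟂ B) : (A ⊔ B).topologicalClosure ⊓ Bᗮ ≤ A.topologicalClosure := by
  rintro u ⟨hu, huB⟩
  set C := A.topologicalClosure
  have : CompleteSpace C := A.isClosed_topologicalClosure.completeSpace_coe
  have hCB : C ≤ Bᗮ := A.topologicalClosure_minimal hAB B.isClosed_orthogonal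
  have hdiff : u - C.starProjection u ∈ (A ⊔ B)ᗮ := by
    rw [← inf_orthogonal]
    exact ⟨orthogonal_le A.le_topologicalClosure (C.sub_starProjection_mem_orthogonal u),
      sub_mem huB (hCB (C.starProjection_apply_mem u))⟩
  have hdiff' : u - C.starProjection u ∈ (A ⊔ B).topologicalClosureᗮ := by
    rwa [← orthogonal_orthogonal_eq_closure, triorthogonal_eq_orthogonal]
  have hself : ⟪u - C.starProjection u, u - C.starProjection u⟫_𝕜 = 0 := by
    rw [inner_sub_left, inner_right_of_mem_orthogonal hu hdiff',
      inner_right_of_mem_orthogonal (C.starProjection_apply_mem u)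
        (C.sub_starProjection_mem_orthogonal u), sub_zero]
  rw [← C.starProjection_eq_self_iff, eq_comm, ← sub_eq_zero]
  exact inner_self_eq_zero.1 hself

lemma map_starProjection_le_inf {K U : Submodule 𝕜 E} [K.HasOrthogonalProjection]
    (hKU : Kᗮ ≤ U) : U.map (K.starProjection : E →ₗ[𝕜] E) ≤ U ⊓ K := by
  rintro _ ⟨v, hv, rfl⟩
  refine ⟨?_, K.starProjection_apply_mem v⟩
  rw [ContinuousLinearMap.coe_coe, ← sub_sub_cancel v (K.starProjection v)]
  exact sub_mem hv (hKU (K.sub_starProjection_mem_orthogonal v))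

lemma topologicalClosure_inf_le_topologicalClosure_map_starProjection
    (U : Submodule 𝕜 E) (K : Submodule 𝕜 E) [K.HasOrthogonalProjection] :
    U.topologicalClosure ⊓ K ≤ (U.map (K.starProjection : E →ₗ[𝕜] E)).topologicalClosure := by
  rintro y ⟨hyU, hyK⟩
  exact topologicalClosure_map K.starProjection U ⟨y, hyU, K.starProjection_eq_self_iff.2 hyK⟩

/-- `(ker T†)ᗮ = closure (T K ⊔ T Kᗮ)` with `T K ⊥ T Kᗮ`, so
`topologicalClosure_sup_inf_orthogonal_le` bounds `(ker T† ⊔ T Kᗮ)ᗮ` by `closure (T K)`. -/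
lemma orthogonal_map_eq_topologicalClosure_sup_ker_adjoint [CompleteSpace E] [CompleteSpace F]
    (T : E →L[𝕜] F) (hT : ∀ x, ‖T x‖ = ‖x‖) (K : Submodule 𝕜 E) [K.HasOrthogonalProjection] :
    (K.map (T : E →ₗ[𝕜] F))ᗮ =
      (Kᗮ.map (T : E →ₗ[𝕜] F) ⊔ LinearMap.ker (adjoint T : F →ₗ[𝕜] E)).topologicalClosure := by
  let Ti : E →ₗᵢ[𝕜] F := { toLinearMap := T, norm_map' := hT }
  have hperp : Kᗮ.map (T : E →ₗ[𝕜] F) ⟂ K.map (T : E →ₗ[𝕜] F) :=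
    (map_orthogonal K Ti).trans_le inf_le_left
  have hker : LinearMap.ker (adjoint T : F →ₗ[𝕜] E) ≤ (K.map (T : E →ₗ[𝕜] F))ᗮ := by
    rw [← T.orthogonal_range]
    exact orthogonal_le LinearMap.map_le_range
  refine le_antisymm ?_ (topologicalClosure_minimal _ (sup_le hperp hker) (isClosed_orthogonal _))
  have hrange : (LinearMap.ker (adjoint T : F →ₗ[𝕜] E))ᗮ =
      (K.map (T : E →ₗ[𝕜] F) ⊔ Kᗮ.map (T : E →ₗ[𝕜] F)).topologicalClosure := by
    rw [← T.orthogonal_range, orthogonal_orthogonal_eq_closure, ← map_sup,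
      sup_orthogonal_of_hasOrthogonalProjection, map_top]
  have hsup : (Kᗮ.map (T : E →ₗ[𝕜] F) ⊔ LinearMap.ker (adjoint T : F →ₗ[𝕜] E))ᗮ ≤
      (K.map (T : E →ₗ[𝕜] F))ᗮᗮ := by
    rw [← inf_orthogonal, hrange, orthogonal_orthogonal_eq_closure, inf_comm]
    exact topologicalClosure_sup_inf_orthogonal_le hperp.symm
  calc _ = (K.map (T : E →ₗ[𝕜] F))ᗮᗮᗮ := triorthogonal_eq_orthogonal.symm
    _ ≤ _ := orthogonal_le hsup
    _ = _ := orthogonal_orthogonal_eq_closure _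

lemma map_subtype_ker_adjoint_eq_orthogonal_map_inf {K₁ : Submodule 𝕜 E} {K₂ : Submodule 𝕜 F}
    [CompleteSpace K₁] [CompleteSpace K₂] (T : E →L[𝕜] F) (Tt : K₁ →L[𝕜] K₂)
    (hTt : ∀ x : K₁, (Tt x : F) = T x) :
    (LinearMap.ker (adjoint Tt : K₂ →ₗ[𝕜] K₁)).map K₂.subtype =
      (K₁.map (T : E →ₗ[𝕜] F))ᗮ ⊓ K₂ := by
  ext y
  simp only [← Tt.orthogonal_range, mem_map, mem_inf, mem_orthogonal, LinearMap.mem_range,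
    forall_exists_index, forall_apply_eq_imp_iff, subtype_apply, coe_inner, coe_coe, hTt, and_imp,
    forall_apply_eq_imp_iff₂]
  constructor
  · rintro ⟨z, hz, rfl⟩
    exact ⟨fun x hx ↦ hz ⟨x, hx⟩, z.2⟩
  · rintro ⟨hy, hyK⟩
    exact ⟨⟨y, hyK⟩, fun x ↦ hy x x.2, rfl⟩

end Submodule

open Submodule

/-- For an isometry T with T K₁ ⊆ K₂, ker T̃* = closed span of L and P_{K₂}(ker T*). -/
theorem stmt_3
    {H₁ H₂ : Type*} [NormedAddCommGroup H₁] [InnerProductSpace ℂ H₁] [CompleteSpace H₁]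
    [NormedAddCommGroup H₂] [InnerProductSpace ℂ H₂] [CompleteSpace H₂]
    (T : H₁ →L[ℂ] H₂) (hT : ∀ x, ‖T x‖ = ‖x‖)
    (K₁ : Submodule ℂ H₁) (K₂ : Submodule ℂ H₂)
    [CompleteSpace K₁] [CompleteSpace K₂]
    (hTK : ∀ x ∈ K₁, T x ∈ K₂)
    (Tt : K₁ →L[ℂ] K₂) (hTt : ∀ x : K₁, (Tt x : H₂) = T x)
    (L : Submodule ℂ H₂)
    (hL : L = (K₂ᗮ ⊔ Submodule.map (T : H₁ →ₗ[ℂ] H₂) K₁ᗮ).topologicalClosure ⊓ (K₂ᗮ)ᗮ) :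
    Submodule.map K₂.subtype (LinearMap.ker (adjoint Tt : K₂ →ₗ[ℂ] K₁)) =
      (L ⊔ Submodule.map ((K₂.subtypeL ∘L K₂.orthogonalProjectionOnto : H₂ →L[ℂ] H₂) : H₂ →ₗ[ℂ] H₂)
        (LinearMap.ker (adjoint T : H₂ →ₗ[ℂ] H₁))).topologicalClosure := by
  change _ = (L ⊔ (LinearMap.ker (adjoint T : H₂ →ₗ[ℂ] H₁)).map
    (K₂.starProjection : H₂ →ₗ[ℂ] H₂)).topologicalClosure
  set TK₁ := K₁.map (T : H₁ →ₗ[ℂ] H₂)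
  set TN₁ := K₁ᗮ.map (T : H₁ →ₗ[ℂ] H₂)
  set kerTadj := LinearMap.ker (adjoint T : H₂ →ₗ[ℂ] H₁)
  have hTK₁ : TK₁ᗮ = (TN₁ ⊔ kerTadj).topologicalClosure :=
    orthogonal_map_eq_topologicalClosure_sup_ker_adjoint T hT K₁
  have hN₂ : K₂ᗮ ≤ TK₁ᗮ := orthogonal_le (map_le_iff_le_comap.2 hTK)
  have hTN₁ : TN₁ ≤ TK₁ᗮ := hTK₁ ▸ le_sup_left.trans (le_topologicalClosure _)
  have hkerTadj : kerTadj ≤ TK₁ᗮ := hTK₁ ▸ le_sup_right.trans (le_topologicalClosure _)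
  have hL_le : L ≤ TK₁ᗮ ⊓ K₂ := by
    rw [hL, K₂.orthogonal_orthogonal]
    exact inf_le_inf_right _ (topologicalClosure_minimal _ (sup_le hN₂ hTN₁) (isClosed_orthogonal _))
  have hTN₁_L : TN₁.map (K₂.starProjection : H₂ →ₗ[ℂ] H₂) ≤ L :=
    hL ▸ ((map_mono le_sup_right).trans (map_starProjection_le_inf le_sup_left)).trans
      (inf_le_inf (le_topologicalClosure _) K₂.le_orthogonal_orthogonal)
  have hK₂_closed : IsClosed (K₂ : Set H₂) := K₂.orthogonal_orthogonal ▸ K₂ᗮ.isClosed_orthogonal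
  rw [map_subtype_ker_adjoint_eq_orthogonal_map_inf T Tt hTt]
  refine le_antisymm ?_ (topologicalClosure_minimal _
    (sup_le hL_le ((map_mono hkerTadj).trans (map_starProjection_le_inf hN₂)))
    ((isClosed_orthogonal _).inter hK₂_closed))
  calc TK₁ᗮ ⊓ K₂ = (TN₁ ⊔ kerTadj).topologicalClosure ⊓ K₂ := by rw [hTK₁]
    _ ≤ ((TN₁ ⊔ kerTadj).map (K₂.starProjection : H₂ →ₗ[ℂ] H₂)).topologicalClosure :=
      topologicalClosure_inf_le_topologicalClosure_map_starProjection _ K₂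
    _ ≤ _ := by
      rw [Submodule.map_sup]
      exact topologicalClosure_mono (sup_le_sup_right hTN₁_L _)
end

section
/- Let E be a row contraction on H_E = H_C ⊕ H_A that is a contractive lifting of C (so E_j* H_C ⊆ H_C for all j) and suppose E is minimal, i.e., the smallest E-invariant closed subspace containing H_C is H_E. Then the compression A = (A₁, …, A_d), A_j = P_{H_A} E_j|_{H_A}, is completely non-coisometric: if z ∈ H_A satisfies Σ_{|α|=n} ‖A_α* z‖² = ‖z‖² for all n ∈ ℕ, then z = 0. -/
/-!
Let `P` be the projection onto `H_A` and `z ∈ H_A` with `∑_{|α|=n} ‖A_α* z‖² = ‖z‖²` for all `n`.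
By induction on `n`, `A_α* z = E_α* z ∈ H_A` for every word of length `n`: the row contraction
gives `∑_{|α|=n+1} ‖E_α* z‖² ≤ ∑_{|α|=n} ‖E_α* z‖² = ‖z‖²`, while the compressed vectors
`A_α* z = P E_α* z` still carry total mass `‖z‖²`, so `P` shrinks none of the `E_α* z`.
Hence `⟪E_α x, z⟫ = ⟪x, E_α* z⟫ = 0` for `x ∈ H_C`, and minimality forces `z = 0`.
-/

open ContinuousLinearMap

/-- The operator Eα = E_{α₁} ⋯ E_{α_m} for a word α. -/
noncomputable def wordOp {H : Type*} [NormedAddCommGroup H] [InnerProductSpace ℂ H]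
    {d : ℕ} (E : Fin d → H →L[ℂ] H) {m : ℕ} (α : Fin m → Fin d) : H →L[ℂ] H :=
  (List.ofFn fun i => E (α i)).prod

/-- The operator Aα* = A_{α_m}* ⋯ A_{α₁}* built from the compressions
A_j = P_{H_A} E_j |_{H_A}, where A_j* acts on H as P_{H_A} E_j* P_{H_A}. -/
noncomputable def adjWord {H : Type*} [NormedAddCommGroup H] [InnerProductSpace ℂ H]
    [CompleteSpace H] {d : ℕ} (E : Fin d → H →L[ℂ] H) (HA : Submodule ℂ H)
    [CompleteSpace HA] {m : ℕ} (α : Fin m → Fin d) : H →L[ℂ] H :=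
  ((List.ofFn fun i =>
      (HA.subtypeL ∘L HA.orthogonalProjection) ∘L (adjoint (E (α i))) ∘L
        (HA.subtypeL ∘L HA.orthogonalProjection)).reverse).prod

theorem Submodule.forall_mem_of_sum_norm_sq_le_sum_norm_starProjection_sq
    {𝕜 E ι : Type*} [RCLike 𝕜] [NormedAddCommGroup E] [InnerProductSpace 𝕜 E] [Fintype ι]
    (K : Submodule 𝕜 E) [K.HasOrthogonalProjection] (v : ι → E)
    (h : ∑ i, ‖v i‖ ^ 2 ≤ ∑ i, ‖K.starProjection (v i)‖ ^ 2) (i : ι) : v i ∈ K := by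
  have hpyth : ∀ i, ‖v i‖ ^ 2 = ‖K.starProjection (v i)‖ ^ 2 + ‖Kᗮ.starProjection (v i)‖ ^ 2 :=
    fun i => norm_sq_eq_add_norm_sq_projection (v i) K
  have hsum : ∑ i, ‖Kᗮ.starProjection (v i)‖ ^ 2 = 0 := by
    refine le_antisymm ?_ (by positivity)
    simp only [hpyth, Finset.sum_add_distrib] at h
    linarith
  have hi : Kᗮ.starProjection (v i) = 0 := by
    simpa using (Finset.sum_eq_zero_iff_of_nonneg (fun i _ => by positivity)).mp hsum i
      (Finset.mem_univ i)
  rw [← K.starProjection_add_starProjection_orthogonal (v i), hi, add_zero]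
  exact K.starProjection_apply_mem (v i)

theorem sum_norm_sq_adjoint_apply_le_of_rowContraction {𝕜 H : Type*} [RCLike 𝕜]
    [NormedAddCommGroup H] [InnerProductSpace 𝕜 H] [CompleteSpace H] {d : ℕ}
    (E : Fin d → H →L[𝕜] H) (hrow : ∀ x : Fin d → H, ‖∑ j, E j (x j)‖ ^ 2 ≤ ∑ j, ‖x j‖ ^ 2)
    (w : H) : ∑ j, ‖adjoint (E j) w‖ ^ 2 ≤ ‖w‖ ^ 2 := by
  set S := ∑ j, ‖adjoint (E j) w‖ ^ 2
  set y := ∑ j, E j (adjoint (E j) w)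
  have hS : S = RCLike.re (inner 𝕜 y w) := by
    rw [sum_inner, map_sum]
    exact Finset.sum_congr rfl fun j _ => by rw [← adjoint_inner_right, inner_self_eq_norm_sq]
  have hSy : S ≤ ‖y‖ * ‖w‖ := hS ▸ re_inner_le_norm y w
  have hy : ‖y‖ ^ 2 ≤ S := hrow fun j => adjoint (E j) w
  have hS0 : 0 ≤ S := by positivity
  nlinarith [norm_nonneg y, norm_nonneg w, sq_nonneg (‖y‖ - ‖w‖)]

theorem Fintype.sum_tuple_succ {α M : Type*} [Fintype α] [AddCommMonoid M] {n : ℕ}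
    (f : (Fin (n + 1) → α) → M) : ∑ a, f a = ∑ b : Fin n → α, ∑ j, f (Fin.snoc b j) := by
  rw [← (Fin.snocEquiv fun _ => α).sum_comp, Fintype.sum_prod_type_right]
  rfl

section Words

variable {H : Type*} [NormedAddCommGroup H] [InnerProductSpace ℂ H] {d : ℕ}
  (E : Fin d → H →L[ℂ] H)

theorem wordOp_snoc {n : ℕ} (β : Fin n → Fin d) (j : Fin d) :
    wordOp E (Fin.snoc β j) = wordOp E β ∘L E j := by
  rw [wordOp, List.ofFn_succ']
  simp [wordOp, ContinuousLinearMap.mul_def]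

variable [CompleteSpace H]

theorem adjoint_wordOp_snoc {n : ℕ} (β : Fin n → Fin d) (j : Fin d) :
    adjoint (wordOp E (Fin.snoc β j)) = adjoint (E j) ∘L adjoint (wordOp E β) := by
  rw [wordOp_snoc, adjoint_comp]

theorem adjWord_snoc (HA : Submodule ℂ H) [CompleteSpace HA] {n : ℕ} (β : Fin n → Fin d)
    (j : Fin d) :
    adjWord E HA (Fin.snoc β j) =
      (HA.starProjection ∘L adjoint (E j) ∘L HA.starProjection) ∘L adjWord E HA β := by
  rw [adjWord, List.ofFn_succ']
  simp [adjWord, ContinuousLinearMap.mul_def, Submodule.starProjection]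

theorem sum_norm_sq_adjoint_wordOp_succ_le
    (hrow : ∀ x : Fin d → H, ‖∑ j, E j (x j)‖ ^ 2 ≤ ∑ j, ‖x j‖ ^ 2) (w : H) (n : ℕ) :
    ∑ α : Fin (n + 1) → Fin d, ‖adjoint (wordOp E α) w‖ ^ 2 ≤
      ∑ β : Fin n → Fin d, ‖adjoint (wordOp E β) w‖ ^ 2 := by
  simp only [Fintype.sum_tuple_succ, adjoint_wordOp_snoc, comp_apply]
  exact Finset.sum_le_sum fun β _ => sum_norm_sq_adjoint_apply_le_of_rowContraction E hrow _

theorem adjWord_apply_eq_adjoint_wordOp_apply_and_mem (HA : Submodule ℂ H) [CompleteSpace HA]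
    (hrow : ∀ x : Fin d → H, ‖∑ j, E j (x j)‖ ^ 2 ≤ ∑ j, ‖x j‖ ^ 2) {z : H} (hz : z ∈ HA)
    (hcoiso : ∀ n : ℕ, ∑ α : Fin n → Fin d, ‖adjWord E HA α z‖ ^ 2 = ‖z‖ ^ 2) :
    ∀ {n : ℕ} (α : Fin n → Fin d),
      adjWord E HA α z = adjoint (wordOp E α) z ∧ adjoint (wordOp E α) z ∈ HA := by
  intro n
  induction n with
  | zero =>
    intro α
    simpa [adjWord, wordOp, adjoint_one] using hz
  | succ n ih =>
    set P := HA.starProjection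
    have hsnoc (β : Fin n → Fin d) (j : Fin d) :
        adjWord E HA (Fin.snoc β j) z = P (adjoint (wordOp E (Fin.snoc β j)) z) := by
      simp [adjWord_snoc, adjoint_wordOp_snoc, (ih β).1,
        Submodule.starProjection_eq_self_iff.mpr (ih β).2, P]
    have hproj (α : Fin (n + 1) → Fin d) : adjWord E HA α z = P (adjoint (wordOp E α) z) := by
      simpa only [Fin.snoc_init_self] using hsnoc (Fin.init α) (α (Fin.last n))
    have hle : ∑ α : Fin (n + 1) → Fin d, ‖adjoint (wordOp E α) z‖ ^ 2 ≤
        ∑ α : Fin (n + 1) → Fin d, ‖P (adjoint (wordOp E α) z)‖ ^ 2 := calc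
      _ ≤ ∑ β : Fin n → Fin d, ‖adjoint (wordOp E β) z‖ ^ 2 :=
        sum_norm_sq_adjoint_wordOp_succ_le E hrow z n
      _ = ‖z‖ ^ 2 := by simpa only [fun β => (ih β).1] using hcoiso n
      _ = _ := by simpa only [hproj] using (hcoiso (n + 1)).symm
    intro α
    have hmem := HA.forall_mem_of_sum_norm_sq_le_sum_norm_starProjection_sq _ hle α
    exact ⟨by rw [hproj, Submodule.starProjection_eq_self_iff.mpr hmem], hmem⟩
end Words

theorem stmt_10_general
    {H : Type*} [NormedAddCommGroup H] [InnerProductSpace ℂ H] [CompleteSpace H]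
    {d : ℕ} (E : Fin d → H →L[ℂ] H)
    (HC : Submodule ℂ H)
    (HA : Submodule ℂ H) [CompleteSpace HA] (hA : HA = HCᗮ)
    (hrow : ∀ x : Fin d → H, ‖∑ j, E j (x j)‖ ^ 2 ≤ ∑ j, ‖x j‖ ^ 2)
    (hmin : (Submodule.span ℂ {y : H | ∃ (m : ℕ) (α : Fin m → Fin d) (x : H),
        x ∈ HC ∧ y = wordOp E α x}).topologicalClosure = ⊤) :
    ∀ z ∈ HA, (∀ n : ℕ, ∑ α : Fin n → Fin d, ‖adjWord E HA α z‖ ^ 2 = ‖z‖ ^ 2) →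
      z = 0 := by
  intro z hz hcoiso
  have horth : ℂ ∙ z ⟂ Submodule.span ℂ {y : H | ∃ (m : ℕ) (α : Fin m → Fin d) (x : H),
      x ∈ HC ∧ y = wordOp E α x} := by
    rw [Submodule.isOrtho_span]
    rintro _ rfl _ ⟨m, α, x, hx, rfl⟩
    have hmem := (adjWord_apply_eq_adjoint_wordOp_apply_and_mem E HA hrow hz hcoiso α).2
    rw [hA] at hmem
    rw [← adjoint_inner_left]
    exact Submodule.inner_left_of_mem_orthogonal hx hmem
  rw [← Submodule.mem_bot ℂ, ← Submodule.topologicalClosure_eq_top_iff.mp hmin]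
  exact horth (Submodule.mem_span_singleton_self z)

/-- If E is a minimal contractive lifting of C on H_E = H_C ⊕ H_A, then the
compression A to H_A is completely non-coisometric. -/
theorem stmt_10
    {H : Type*} [NormedAddCommGroup H] [InnerProductSpace ℂ H] [CompleteSpace H]
    {d : ℕ} (E : Fin d → H →L[ℂ] H)
    (HC : Submodule ℂ H) (hC : IsClosed (HC : Set H))
    (HA : Submodule ℂ H) [CompleteSpace HA] (hA : HA = HCᗮ)
    (hrow : ∀ x : Fin d → H, ‖∑ j, E j (x j)‖ ^ 2 ≤ ∑ j, ‖x j‖ ^ 2)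
    (hlift : ∀ j, ∀ x ∈ HA, E j x ∈ HA)
    (hmin : (Submodule.span ℂ {y : H | ∃ (m : ℕ) (α : Fin m → Fin d) (x : H),
        x ∈ HC ∧ y = wordOp E α x}).topologicalClosure = ⊤) :
    ∀ z ∈ HA, (∀ n : ℕ, ∑ α : Fin n → Fin d, ‖adjWord E HA α z‖ ^ 2 = ‖z‖ ^ 2) →
      z = 0 :=
  stmt_10_general E HC HA hA hrow hmin
end
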